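/- Let A ⊆ ℝ be Lebesgue measurable and set G = {x ∈ A : ℝ \ A is I-sparse at x}. Then G is the interior of A in the I-sparse set topology: G ∈ 𝒰, G ⊆ A, and every V ∈ 𝒰 with V ⊆ A satisfies V ⊆ G. -/

import Mathlib

open MeasureTheory Filter Set
open scoped ENNReal

noncomputable section

/-- A nontrivial admissible ideal of subsets of ℕ: closed under subsets and
finite unions, contains every finite set, and does not contain ℕ itself. -/
structure AdmissibleIdeal : Type where
  carrier : Set (Set ℕ)
  subset_mem : ∀ ⦃A B : Set ℕ⦄, A ∈ carrier → B ⊆ A → B ∈ carrier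
  union_mem : ∀ ⦃A B : Set ℕ⦄, A ∈ carrier → B ∈ carrier → A ∪ B ∈ carrier
  finite_mem : ∀ A : Set ℕ, A.Finite → A ∈ carrier
  univ_not_mem : (Set.univ : Set ℕ) ∉ carrier

/-- The filter F(I) = {M ⊆ ℕ : ℕ \ M ∈ I} associated with the ideal I. -/
def AdmissibleIdeal.filter (I : AdmissibleIdeal) : Filter ℕ :=
  Filter.comk (· ∈ I.carrier) (I.finite_mem ∅ Set.finite_empty)
    (fun _t ht _s hs => I.subset_mem ht hs)
    (fun _s hs _t ht => I.union_mem hs ht)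

/-- A sequence of closed intervals admissible about the point `p`:
each `J n` is a closed interval containing `p`, and
`{n : 0 < λ(J n) < 1/n} ∈ F(I)`. -/
def AdmissibleSeq (I : AdmissibleIdeal) (p : ℝ) (J : ℕ → Set ℝ) : Prop :=
  (∀ n, ∃ a b : ℝ, a ≤ b ∧ J n = Set.Icc a b) ∧ (∀ n, p ∈ J n) ∧
    {n : ℕ | 0 < volume (J n) ∧ volume (J n) < (n : ℝ≥0∞)⁻¹} ∈ I.filter

/-- The sequence n ↦ λ(E ∩ J n)/λ(J n) (interpreted as 0 when λ(J n) = 0). -/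
def ratioSeq (E : Set ℝ) (J : ℕ → Set ℝ) : ℕ → ℝ :=
  fun n => (volume (E ∩ J n) / volume (J n)).toReal

/-- Upper I-density of `E` at `p`: sup over admissible sequences of the
limsup along `F(I)` of the measure ratios. -/
def upperIDensity (I : AdmissibleIdeal) (p : ℝ) (E : Set ℝ) : ℝ :=
  sSup {l : ℝ | ∃ J : ℕ → Set ℝ, AdmissibleSeq I p J ∧
    l = Filter.limsup (ratioSeq E J) I.filter}

/-- Lower I-density of `E` at `p`: inf over admissible sequences of the
liminf along `F(I)` of the measure ratios. -/
def lowerIDensity (I : AdmissibleIdeal) (p : ℝ) (E : Set ℝ) : ℝ :=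
  sInf {l : ℝ | ∃ J : ℕ → Set ℝ, AdmissibleSeq I p J ∧
    l = Filter.liminf (ratioSeq E J) I.filter}

/-- `C` is a measurable cover of `A`. -/
def IsMeasurableCover (C A : Set ℝ) : Prop :=
  MeasurableSet C ∧ A ⊆ C ∧
    ∀ F : Set ℝ, MeasurableSet F → F ⊆ C \ A → volume F = 0

/-- `A` is I-sparse at `x`, i.e. `A ∈ S_I(x)`. -/
def ISparseAt (I : AdmissibleIdeal) (A : Set ℝ) (x : ℝ) : Prop :=
  ∀ B : Set ℝ, MeasurableSet B → upperIDensity I x B < 1 →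
    ∀ C : Set ℝ, IsMeasurableCover C A → upperIDensity I x (C ∪ B) < 1

/-- The I-density topology T_I. -/
def IDensityTopology (I : AdmissibleIdeal) : Set (Set ℝ) :=
  {E | MeasurableSet E ∧ ∀ x ∈ E, lowerIDensity I x E = 1}

/-- The I-sparse set topology 𝒰. -/
def sparseTop (I : AdmissibleIdeal) : Set (Set ℝ) :=
  {E | ∀ x ∈ E, ISparseAt I Eᶜ x}

/-! By Lebesgue's density theorem almost every point of `A` is a density point of `A`, and at a
density point the ratios of `Aᶜ` tend to `0` along every admissible sequence, so `Aᶜ` is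
`I`-sparse there; hence `A \ G` is null. Since a measurable cover is a.e. contained in every
measurable set that a.e. contains the covered set, `I`-sparseness at a point passes to a.e.
smaller sets. So `Gᶜ`, which is `Aᶜ` up to a null set, is sparse at every point of `G`, and if
`V ∈ 𝒰` lies in `A` then `Aᶜ ⊆ Vᶜ` is sparse at every point of `V`. -/

open Topology Metric

instance (I : AdmissibleIdeal) : I.filter.NeBot :=
  Filter.neBot_iff.mpr fun h => I.univ_not_mem <| by
    have h_empty : (∅ : Set ℕ) ∈ I.filter := h ▸ Filter.mem_bot
    simpa [AdmissibleIdeal.filter, Filter.mem_comk] using h_empty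

lemma AdmissibleIdeal.filter_le_atTop (I : AdmissibleIdeal) : I.filter ≤ atTop :=
  Nat.cofinite_eq_atTop ▸ fun s hs => by
    simpa [AdmissibleIdeal.filter, Filter.mem_comk] using I.finite_mem _ hs

section ratioSeq

variable (E F : Set ℝ) (J : ℕ → Set ℝ) (n : ℕ)

lemma measure_inter_div_measure_le_one : volume (E ∩ J n) / volume (J n) ≤ 1 :=
  ENNReal.div_le_of_le_mul (by simpa using measure_mono inter_subset_right)

lemma ratioSeq_nonneg : 0 ≤ ratioSeq E J n := ENNReal.toReal_nonneg

lemma ratioSeq_le_one : ratioSeq E J n ≤ 1 :=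
  ENNReal.toReal_le_of_le_ofReal zero_le_one <| by
    simpa using measure_inter_div_measure_le_one E J n

lemma ratioSeq_union_le : ratioSeq (E ∪ F) J n ≤ ratioSeq E J n + ratioSeq F J n := by
  have hE := (measure_inter_div_measure_le_one E J n).trans_lt ENNReal.one_lt_top
  have hF := (measure_inter_div_measure_le_one F J n).trans_lt ENNReal.one_lt_top
  rw [ratioSeq, ratioSeq, ratioSeq, ← ENNReal.toReal_add hE.ne hF.ne]
  refine ENNReal.toReal_mono (ENNReal.add_ne_top.2 ⟨hE.ne, hF.ne⟩) ?_
  rw [ENNReal.div_add_div_same]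
  gcongr
  rw [union_inter_distrib_right]
  exact measure_union_le _ _

variable {E F} in
lemma ratioSeq_mono_ae (h : E ≤ᵐ[volume] F) : ratioSeq E J n ≤ ratioSeq F J n :=
  ENNReal.toReal_mono ((measure_inter_div_measure_le_one F J n).trans_lt ENNReal.one_lt_top).ne <|
    ENNReal.div_le_div_right (measure_mono_ae (h.inter EventuallyLE.rfl)) _

lemma ratioSeq_add_ratioSeq_compl (hE : MeasurableSet E) (h₀ : volume (J n) ≠ 0)
    (h_top : volume (J n) ≠ ∞) : ratioSeq E J n + ratioSeq Eᶜ J n = 1 := by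
  have hE_fin := (measure_inter_div_measure_le_one E J n).trans_lt ENNReal.one_lt_top
  have hEc := (measure_inter_div_measure_le_one Eᶜ J n).trans_lt ENNReal.one_lt_top
  rw [ratioSeq, ratioSeq, ← ENNReal.toReal_add hE_fin.ne hEc.ne, ENNReal.div_add_div_same,
    inter_comm E, inter_comm Eᶜ, ← sdiff_eq, measure_inter_add_sdiff _ hE,
    ENNReal.div_self h₀ h_top, ENNReal.toReal_one]

end ratioSeq

section upperIDensity

variable {I : AdmissibleIdeal} {x : ℝ} {E F : Set ℝ}

lemma isBoundedUnder_le_ratioSeq (E : Set ℝ) (J : ℕ → Set ℝ) :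
    I.filter.IsBoundedUnder (· ≤ ·) (ratioSeq E J) :=
  isBoundedUnder_of ⟨1, ratioSeq_le_one E J⟩

lemma isBoundedUnder_ge_ratioSeq (E : Set ℝ) (J : ℕ → Set ℝ) :
    I.filter.IsBoundedUnder (· ≥ ·) (ratioSeq E J) :=
  isBoundedUnder_of ⟨0, ratioSeq_nonneg E J⟩

lemma limsup_ratioSeq_le_upperIDensity {J : ℕ → Set ℝ} (hJ : AdmissibleSeq I x J) :
    limsup (ratioSeq E J) I.filter ≤ upperIDensity I x E :=
  le_csSup ⟨1, by
    rintro l ⟨J, -, rfl⟩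
    exact limsup_le_of_le (isBoundedUnder_ge_ratioSeq E J).isCoboundedUnder_le
      (.of_forall (ratioSeq_le_one E J))⟩ ⟨J, hJ, rfl⟩

lemma upperIDensity_le_of_forall {c : ℝ} (hc : 0 ≤ c)
    (h : ∀ J, AdmissibleSeq I x J → limsup (ratioSeq E J) I.filter ≤ c) :
    upperIDensity I x E ≤ c :=
  Real.sSup_le (by rintro l ⟨J, hJ, rfl⟩; exact h J hJ) hc

lemma upperIDensity_nonneg : 0 ≤ upperIDensity I x E :=
  Real.sSup_nonneg <| by
    rintro l ⟨J, -, rfl⟩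
    exact le_limsup_of_frequently_le (.of_forall (ratioSeq_nonneg E J))
      (isBoundedUnder_le_ratioSeq E J)

lemma upperIDensity_mono_ae (h : E ≤ᵐ[volume] F) :
    upperIDensity I x E ≤ upperIDensity I x F :=
  upperIDensity_le_of_forall upperIDensity_nonneg fun J hJ =>
    (limsup_le_limsup (.of_forall (ratioSeq_mono_ae J · h))
      (isBoundedUnder_ge_ratioSeq E J).isCoboundedUnder_le
      (isBoundedUnder_le_ratioSeq F J)).trans
    (limsup_ratioSeq_le_upperIDensity hJ)

lemma upperIDensity_union_le_of_tendsto
    (hF : ∀ J, AdmissibleSeq I x J → Tendsto (ratioSeq F J) I.filter (𝓝 0)) :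
    upperIDensity I x (F ∪ E) ≤ upperIDensity I x E :=
  upperIDensity_le_of_forall upperIDensity_nonneg fun J hJ => calc
    limsup (ratioSeq (F ∪ E) J) I.filter ≤ limsup (ratioSeq F J + ratioSeq E J) I.filter :=
      limsup_le_limsup (.of_forall (ratioSeq_union_le F E J))
        (isBoundedUnder_ge_ratioSeq _ J).isCoboundedUnder_le
        (isBoundedUnder_le_add (isBoundedUnder_le_ratioSeq F J) (isBoundedUnder_le_ratioSeq E J))
    _ ≤ limsup (ratioSeq F J) I.filter + limsup (ratioSeq E J) I.filter :=
      limsup_add_le (isBoundedUnder_ge_ratioSeq F J) (isBoundedUnder_le_ratioSeq F J)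
        (isBoundedUnder_ge_ratioSeq E J).isCoboundedUnder_le (isBoundedUnder_le_ratioSeq E J)
    _ ≤ upperIDensity I x E := by
      rw [(hF J hJ).limsup_eq, zero_add]
      exact limsup_ratioSeq_le_upperIDensity hJ

end upperIDensity

lemma isMeasurableCover_toMeasurable (S : Set ℝ) :
    IsMeasurableCover (toMeasurable volume S) S := by
  refine ⟨measurableSet_toMeasurable _ _, subset_toMeasurable _ _, fun F hF hFS => ?_⟩
  have h_disj : S ∩ F = ∅ := eq_empty_of_forall_notMem fun y hy => (hFS hy.2).2 hy.1
  rw [← inter_eq_right.2 (hFS.trans sdiff_subset),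
    Measure.measure_toMeasurable_inter_of_sFinite hF, h_disj, measure_empty]

lemma IsMeasurableCover.ae_le {C S M : Set ℝ} (hC : IsMeasurableCover C S)
    (hM : MeasurableSet M) (hSM : S ≤ᵐ[volume] M) : C ≤ᵐ[volume] M := by
  set N := toMeasurable volume (S \ M)
  have hN : volume N = 0 := by rw [measure_toMeasurable]; exact ae_le_set.1 hSM
  have h_out : volume ((C \ M) \ N) = 0 :=
    hC.2.2 _ ((hC.1.diff hM).diff (measurableSet_toMeasurable _ _))
      fun y hy => ⟨hy.1.1, fun hyS => hy.2 (subset_toMeasurable _ _ ⟨hyS, hy.1.2⟩)⟩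
  refine ae_le_set.2 (measure_mono_null (fun y hy => ?_) (measure_union_null h_out hN))
  by_cases hyN : y ∈ N
  · exact Or.inr hyN
  · exact Or.inl ⟨hy, hyN⟩

section ISparseAt

variable {I : AdmissibleIdeal} {x : ℝ}

lemma ISparseAt.mono_ae {S T : Set ℝ} (hT : ISparseAt I T x) (hST : S ≤ᵐ[volume] T) :
    ISparseAt I S x := fun B hB hB_lt _ hC =>
  (upperIDensity_mono_ae ((hC.ae_le (measurableSet_toMeasurable _ _)
    (hST.trans (subset_toMeasurable _ _).eventuallyLE)).union EventuallyLE.rfl)).trans_lt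
    (hT B hB hB_lt _ (isMeasurableCover_toMeasurable T))

lemma iSparseAt_of_tendsto_ratioSeq {F : Set ℝ} (hF : MeasurableSet F)
    (h : ∀ J, AdmissibleSeq I x J → Tendsto (ratioSeq F J) I.filter (𝓝 0)) :
    ISparseAt I F x := fun B _ hB_lt C hC => calc
  upperIDensity I x (C ∪ B) ≤ upperIDensity I x (F ∪ B) :=
    upperIDensity_mono_ae ((hC.ae_le hF EventuallyLE.rfl).union EventuallyLE.rfl)
  _ ≤ upperIDensity I x B := upperIDensity_union_le_of_tendsto h
  _ < 1 := hB_lt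

end ISparseAt

namespace AdmissibleSeq

variable {I : AdmissibleIdeal} {x : ℝ} {J : ℕ → Set ℝ}

lemma eventually_volume (hJ : AdmissibleSeq I x J) :
    ∀ᶠ n in I.filter, 0 < volume (J n) ∧ volume (J n) < (n : ℝ≥0∞)⁻¹ :=
  hJ.2.2

lemma volume_ne_top (hJ : AdmissibleSeq I x J) (n : ℕ) : volume (J n) ≠ ∞ := by
  obtain ⟨a, b, -, hab⟩ := hJ.1 n
  exact hab ▸ measure_Icc_lt_top.ne

lemma tendsto_volume (hJ : AdmissibleSeq I x J) :
    Tendsto (fun n => volume (J n)) I.filter (𝓝 0) :=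
  tendsto_of_tendsto_of_tendsto_of_le_of_le' tendsto_const_nhds
    (ENNReal.tendsto_inv_nat_nhds_zero.mono_left I.filter_le_atTop)
    (.of_forall fun _ => zero_le) (hJ.eventually_volume.mono fun _ hn => hn.2.le)

lemma exists_closedBall (hJ : AdmissibleSeq I x J) : ∃ w δ : ℕ → ℝ,
    J = (fun n => closedBall (w n) (δ n)) ∧ (∀ n, x ∈ closedBall (w n) (1 * δ n)) ∧
      Tendsto δ I.filter (𝓝[>] 0) := by
  choose a b hab hJab using hJ.1
  have hJ_ball : ∀ n, J n = closedBall ((a n + b n) / 2) ((b n - a n) / 2) := fun n => by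
    rw [hJab, Real.closedBall_eq_Icc]
    ring_nf
  have hδ : ∀ n, (b n - a n) / 2 = (volume (J n)).toReal / 2 := fun n => by
    rw [hJab, Real.volume_Icc, ENNReal.toReal_ofReal (sub_nonneg.2 (hab n))]
  refine ⟨_, _, funext hJ_ball, fun n => by rw [one_mul, ← hJ_ball]; exact hJ.2.1 n, ?_⟩
  simp_rw [hδ]
  refine tendsto_nhdsWithin_iff.2 ⟨?_, hJ.eventually_volume.mono fun n hn => ?_⟩
  · simpa using ((ENNReal.tendsto_toReal ENNReal.zero_ne_top).comp hJ.tendsto_volume).div_const 2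
  · exact half_pos (ENNReal.toReal_pos hn.1.ne' (hJ.volume_ne_top n))

end AdmissibleSeq

/-- Admissible intervals need not be centred at `x`, hence the density theorem for closed balls
with moving centres. -/
lemma ae_tendsto_ratioSeq (I : AdmissibleIdeal) (A : Set ℝ) :
    ∀ᵐ x ∂volume.restrict A, ∀ J, AdmissibleSeq I x J →
      Tendsto (ratioSeq A J) I.filter (𝓝 1) := by
  filter_upwards [IsUnifLocDoublingMeasure.ae_tendsto_measure_inter_div volume A 1]
    with x hx J hJ
  obtain ⟨w, δ, rfl, hx_mem, hδ⟩ := hJ.exists_closedBall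
  exact (ENNReal.tendsto_toReal ENNReal.one_ne_top).comp (hx w δ hδ (.of_forall hx_mem))

lemma ae_iSparseAt_compl (I : AdmissibleIdeal) {A : Set ℝ} (hA : MeasurableSet A) :
    ∀ᵐ x, x ∈ A → ISparseAt I Aᶜ x := by
  filter_upwards [(ae_restrict_iff' hA).1 (ae_tendsto_ratioSeq I A)] with x hx hxA
  refine iSparseAt_of_tendsto_ratioSeq hA.compl fun J hJ => ?_
  have h_compl : ∀ᶠ n in I.filter, 1 - ratioSeq A J n = ratioSeq Aᶜ J n :=
    hJ.eventually_volume.mono fun n hn => sub_eq_of_eq_add' <|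
      (ratioSeq_add_ratioSeq_compl A J n hA hn.1.ne' (hJ.volume_ne_top n)).symm
  simpa using ((hx hxA J hJ).const_sub 1).congr' h_compl

/-- For measurable `A`, the set `G = {x ∈ A : ℝ \ A ∈ S_I(x)}` is the interior of
`A` in the I-sparse set topology. -/
theorem sparseTop_interior (I : AdmissibleIdeal) (A : Set ℝ) (hA : MeasurableSet A) :
    {x ∈ A | ISparseAt I Aᶜ x} ∈ sparseTop I ∧
    {x ∈ A | ISparseAt I Aᶜ x} ⊆ A ∧
    ∀ V ∈ sparseTop I, V ⊆ A → V ⊆ {x ∈ A | ISparseAt I Aᶜ x} := by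
  set G := {x ∈ A | ISparseAt I Aᶜ x}
  have hG : Gᶜ ≤ᵐ[volume] Aᶜ := by
    filter_upwards [ae_iSparseAt_compl I hA] with x hx hxG hxA
    exact hxG ⟨hxA, hx hxA⟩
  exact ⟨fun x hx => hx.2.mono_ae hG, fun x hx => hx.1, fun V hV hVA x hx =>
    ⟨hVA hx, (hV x hx).mono_ae (compl_subset_compl.2 hVA).eventuallyLE⟩⟩
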